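/- For all integers 0 ≤ k ≤ j, the following identity holds in ℚ(q, a): ∑_{h=0}^{k} (−q)^{h−j} a^{h−j} q^{j² + h² − 2kh} [j−h; k−h]_+ [j; h]_+ = (−q)^{−j} a^{−j} q^{j²} (a q^{2−2k}; q²)_k [j; k]_+. (This is the product form of the rescaled right twist rule applied to the basis web UP[j,k].) -/

import Mathlib

noncomputable section

open Finset

/-- The field `ℚ(q, a)` of rational functions in two variables. -/
abbrev F : Type := FractionRing (MvPolynomial (Fin 2) ℚ)

/-- The variable `q`. -/
def q : F := algebraMap (MvPolynomial (Fin 2) ℚ) F (MvPolynomial.X 0)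

/-- The variable `a`. -/
def a : F := algebraMap (MvPolynomial (Fin 2) ℚ) F (MvPolynomial.X 1)

/-- The q-Pochhammer symbol `(x; y)_n = ∏_{j=0}^{n-1} (1 - x yʲ)`. -/
def qPoch (x y : F) (n : ℕ) : F := ∏ i ∈ Finset.range n, (1 - x * y ^ i)

/-- `(q²;q²)_m = ∏_{i=1}^{m} (1 - q^{2i})`. -/
def qp (m : ℕ) : F := qPoch (q ^ 2) (q ^ 2) m

/-- The positive quantum binomial coefficient `[N; k]₊`. -/
def qbin (N k : ℕ) : F := qp N / (qp k * qp (N - k))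


/-! The summand factors as `[j;k]₊` times the `h`-th term of Rothe's `q`-binomial expansion
of `(y; q²)_k` at `y = a q^{2-2k}`, because `[j-h; k-h]₊ [j;h]₊ = [j;k]₊ [k;h]₊`
(subset-of-a-subset revision). Rothe's identity follows by induction on `k` from the
`q`-Pascal rule, using `(y; q²)_{k+1} = (1 - y) (y q²; q²)_k`. -/

theorem q_ne_zero : q ≠ 0 :=
  (map_ne_zero_iff _ (IsFractionRing.injective _ _)).2 (MvPolynomial.X_ne_zero _)

theorem a_ne_zero : a ≠ 0 :=
  (map_ne_zero_iff _ (IsFractionRing.injective _ _)).2 (MvPolynomial.X_ne_zero _)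

theorem one_sub_q_pow_ne_zero {n : ℕ} (hn : n ≠ 0) : 1 - q ^ n ≠ 0 := by
  intro h
  have h' : algebraMap (MvPolynomial (Fin 2) ℚ) F (1 - MvPolynomial.X 0 ^ n) = 0 := by
    rw [map_sub, map_one, map_pow]
    exact h
  have := congrArg (MvPolynomial.eval (fun _ => (0 : ℚ)))
    ((map_eq_zero_iff _ (IsFractionRing.injective _ _)).1 h')
  simp [zero_pow hn] at this

theorem qPoch_succ' (y z : F) (k : ℕ) : qPoch y z (k + 1) = (1 - y) * qPoch (y * z) z k := by
  simp only [qPoch, prod_range_succ', pow_succ', pow_zero, mul_one, mul_assoc, mul_comm (1 - y)]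

theorem qp_zero : qp 0 = 1 := by simp [qp, qPoch]

theorem qp_succ (m : ℕ) : qp (m + 1) = qp m * (1 - q ^ (2 * m + 2)) := by
  rw [qp, qp, qPoch, qPoch, prod_range_succ]
  ring

theorem qp_ne_zero (m : ℕ) : qp m ≠ 0 := by
  induction m with
  | zero => exact qp_zero ▸ one_ne_zero
  | succ m ih => rw [qp_succ]; exact mul_ne_zero ih (one_sub_q_pow_ne_zero (by omega))

theorem qbin_zero_right (n : ℕ) : qbin n 0 = 1 := by
  rw [qbin, qp_zero, Nat.sub_zero, one_mul, div_self (qp_ne_zero n)]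

theorem qbin_self (n : ℕ) : qbin n n = 1 := by
  rw [qbin, Nat.sub_self, qp_zero, mul_one, div_self (qp_ne_zero n)]

theorem qbin_mul_qbin {j k h : ℕ} (hh : h ≤ k) (hk : k ≤ j) :
    qbin (j - h) (k - h) * qbin j h = qbin j k * qbin k h := by
  obtain ⟨b, rfl⟩ := Nat.exists_eq_add_of_le hh
  obtain ⟨c, rfl⟩ := Nat.exists_eq_add_of_le hk
  simp only [qbin, add_assoc, Nat.add_sub_cancel_left, Nat.add_sub_add_left]
  field_simp [qp_ne_zero]

/-- Extending `qbin` by zero past `k = N` makes the `q`-Pascal rule hold for all indices. -/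
def qchoose (N k : ℕ) : F := if k ≤ N then qbin N k else 0

theorem qchoose_of_le {N k : ℕ} (h : k ≤ N) : qchoose N k = qbin N k := if_pos h

theorem qchoose_of_lt {N k : ℕ} (h : N < k) : qchoose N k = 0 := if_neg (by omega)

theorem qchoose_succ_succ (k h : ℕ) :
    qchoose (k + 1) (h + 1) = qchoose k h + q ^ (2 * (h + 1)) * qchoose k (h + 1) := by
  rcases lt_trichotomy h k with hlt | rfl | hgt
  · obtain ⟨m, rfl⟩ := Nat.exists_eq_add_of_lt hlt
    rw [qchoose_of_le (by omega), qchoose_of_le (by omega), qchoose_of_le (by omega), qbin, qbin,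
      qbin, show h + m + 1 + 1 - (h + 1) = m + 1 by omega, show h + m + 1 - h = m + 1 by omega,
      show h + m + 1 - (h + 1) = m by omega, show h + m + 1 + 1 = (h + m + 1) + 1 by omega,
      qp_succ (h + m + 1), qp_succ m, qp_succ h]
    field_simp [qp_ne_zero, one_sub_q_pow_ne_zero]
    ring
  · rw [qchoose_of_le le_rfl, qchoose_of_le le_rfl, qchoose_of_lt (Nat.lt_succ_self h), qbin_self,
      qbin_self]
    ring
  · rw [qchoose_of_lt (by omega), qchoose_of_lt hgt, qchoose_of_lt (by omega)]
    ring

theorem qPoch_q_sq_eq_sum_qchoose (k : ℕ) (y : F) :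
    qPoch y (q ^ 2) k = ∑ h ∈ range (k + 1), (-y) ^ h * q ^ (h * (h - 1)) * qchoose k h := by
  induction k generalizing y with
  | zero => simp [qPoch, qchoose_of_le, qbin_self]
  | succ k ih =>
    rw [qPoch_succ', ih]
    set T : ℕ → F := fun h => (-(y * q ^ 2)) ^ h * q ^ (h * (h - 1)) * qchoose k h with hT
    have term_succ (h : ℕ) :
        (-y) ^ (h + 1) * q ^ ((h + 1) * (h + 1 - 1)) * qchoose (k + 1) (h + 1) =
          -y * T h + T (h + 1) := by
      have hexp : q ^ ((h + 1) * h) = q ^ (2 * h) * q ^ (h * (h - 1)) := by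
        rw [← pow_add]
        cases h with
        | zero => rfl
        | succ n => simp only [Nat.add_sub_cancel]; ring
      simp only [hT, Nat.add_sub_cancel, qchoose_succ_succ, hexp]
      ring
    have shift : ∑ h ∈ range (k + 1), T (h + 1) + T 0 = ∑ h ∈ range (k + 1), T h := by
      have top : T (k + 1) = 0 := by simp [hT, qchoose_of_lt]
      rw [← sum_range_succ', sum_range_succ, top, add_zero]
    have hT0 : T 0 = 1 := by simp [hT, qchoose_of_le, qbin_zero_right]
    conv_rhs =>
      rw [sum_range_succ', sum_congr rfl fun h _ => term_succ h, sum_add_distrib, ← mul_sum]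
    simp only [pow_zero, zero_mul, one_mul, qchoose_of_le (Nat.zero_le _), qbin_zero_right]
    linear_combination hT0 - shift

theorem qPoch_q_sq_eq_sum (k : ℕ) (y : F) :
    qPoch y (q ^ 2) k = ∑ h ∈ range (k + 1), (-y) ^ h * q ^ (h * (h - 1)) * qbin k h := by
  rw [qPoch_q_sq_eq_sum_qchoose]
  exact sum_congr rfl fun h hh => by rw [qchoose_of_le (Nat.lt_succ_iff.1 (mem_range.1 hh))]

theorem Nat.cast_mul_sub_one (h : ℕ) : ((h * (h - 1) : ℕ) : ℤ) = h * ((h : ℤ) - 1) := by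
  cases h with
  | zero => simp
  | succ n => push_cast; ring

theorem zpow_summand_factor {K : Type*} [Field K] {x b : K} (hx : x ≠ 0) (hb : b ≠ 0)
    (j k h : ℕ) :
    (-x) ^ ((h : ℤ) - j) * b ^ ((h : ℤ) - j) * x ^ ((j : ℤ) ^ 2 + h ^ 2 - 2 * k * h) =
      (-x) ^ (-(j : ℤ)) * b ^ (-(j : ℤ)) * x ^ ((j : ℤ) ^ 2) *
        ((-(b * x ^ (2 - 2 * (k : ℤ)))) ^ h * x ^ (h * (h - 1))) := by
  have hx_exp : x ^ h * x ^ ((j : ℤ) ^ 2 + h ^ 2 - 2 * k * h) =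
      x ^ ((j : ℤ) ^ 2) * (x ^ (2 - 2 * (k : ℤ))) ^ h * x ^ (h * (h - 1)) := by
    rw [← zpow_natCast, ← zpow_natCast _ h, ← zpow_natCast _ (h * (h - 1)), ← zpow_mul,
      ← zpow_add₀ hx, ← zpow_add₀ hx, ← zpow_add₀ hx, Nat.cast_mul_sub_one]
    ring_nf
  rw [sub_eq_add_neg, zpow_add₀ (neg_ne_zero.2 hx), zpow_add₀ hb, zpow_natCast, zpow_natCast,
    neg_pow, neg_pow (b * _), mul_pow]
  linear_combination (-1) ^ h * b ^ h * (-x) ^ (-(j : ℤ)) * b ^ (-(j : ℤ)) * hx_exp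

/-- Product form of the rescaled right twist rule on `UP[j,k]`:
`∑_{h=0}^{k} (−q)^{h−j} a^{h−j} q^{j²+h²−2kh} [j−h;k−h]₊ [j;h]₊
 = (−q)^{−j} a^{−j} q^{j²} (a q^{2−2k};q²)_k [j;k]₊`. -/
theorem product_form_R_UP (j k : ℕ) (hk : k ≤ j) :
    ∑ h ∈ Finset.range (k + 1),
      (-q) ^ ((h : ℤ) - (j : ℤ)) * a ^ ((h : ℤ) - (j : ℤ)) *
        q ^ ((j : ℤ) ^ 2 + (h : ℤ) ^ 2 - 2 * (k : ℤ) * (h : ℤ)) *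
        qbin (j - h) (k - h) * qbin j h =
      (-q) ^ (-(j : ℤ)) * a ^ (-(j : ℤ)) * q ^ ((j : ℤ) ^ 2) *
        qPoch (a * q ^ (2 - 2 * (k : ℤ))) (q ^ 2) k * qbin j k := by
  rw [qPoch_q_sq_eq_sum, mul_sum, sum_mul]
  refine sum_congr rfl fun h hh => ?_
  rw [mul_assoc, qbin_mul_qbin (Nat.lt_succ_iff.1 (mem_range.1 hh)) hk,
    zpow_summand_factor q_ne_zero a_ne_zero]
  ring
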